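/- arXiv:1709.05123 — 3 statements merged into one kernel-verified Lean document; each statement's English description precedes it below -/
import Mathlib

section
/- Let R^P = ((A,→_R),P) be an almost-surely terminating probabilistic abstract reduction system, R' = (A',→_{R'}) an abstract reduction system, and G : A → A' a mapping such that: (C1') G is surjective; (C2') both (A,→_R) and R' are normalizing; (C3') s →_R t implies that G(s) and G(t) are related by the reflexive-symmetric-transitive closure of →_{R'}, and conversely, if G(s) and G(t) are related by the reflexive-symmetric-transitive closure of →_{R'} then s and t are related by the reflexive-symmetric-transitive closure of →_R; (C4') if t is a normal form of R then G(t) is a normal form of R', and every preimage under G of a normal form of R' is a normal form of R; (C5') G is injective on normal forms of R. Then R^P is almost-surely convergent if and only if R' is confluent. -/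
open scoped ENNReal NNReal

/-- An element `t` is a *normal form* of the reduction relation `r`
if there is no `u` with `r t u`. -/
def NormalForm {A : Type*} (r : A → A → Prop) (t : A) : Prop := ¬∃ u, r t u

/-- `NFof r s` is the set of normal forms reachable from `s`
via the reflexive-transitive closure of `r`. -/
def NFof {A : Type*} (r : A → A → Prop) (s : A) : Set A :=
  {t | NormalForm r t ∧ Relation.ReflTransGen r s t}

/-- `l` is a finite path from `s` to `t`: a nonempty list starting at `s`,
ending at `t`, whose consecutive elements are related by `r`.
(A list `[s₀, s₁, …, sₙ]` represents the path `s₀ → s₁ → ⋯ → sₙ`, `n ≥ 0`.) -/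
def IsPath {A : Type*} (r : A → A → Prop) (s t : A) (l : List A) : Prop :=
  l.Chain' r ∧ l.head? = some s ∧ l.getLast? = some t

/-- Confluence of an abstract reduction system. -/
def Confluent {A : Type*} (r : A → A → Prop) : Prop :=
  ∀ s s₁ s₂, Relation.ReflTransGen r s s₁ → Relation.ReflTransGen r s s₂ →
    ∃ t, Relation.ReflTransGen r s₁ t ∧ Relation.ReflTransGen r s₂ t

/-- An ARS is normalizing if every element reaches some normal form. -/
def Normalizing {A : Type*} (r : A → A → Prop) : Prop :=
  ∀ s, ∃ t, NormalForm r t ∧ Relation.ReflTransGen r s t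

/-- A probabilistic abstract reduction system (PARS) on a countable set `A`:
a reduction relation `rel` and probabilities `P : A → A → ℝ≥0` with
`P s t > 0` iff `s → t`, and `∑ₜ P s t = 1` for every reducible `s`. -/
structure PARS (A : Type*) [Countable A] where
  rel : A → A → Prop
  P : A → A → ℝ≥0
  pos_iff : ∀ s t, 0 < P s t ↔ rel s t
  sum_one : ∀ s, (∃ t, rel s t) → ∑' t, (P s t : ℝ≥0∞) = 1

namespace PARS

variable {A : Type*} [Countable A]

/-- The probability of a finite path `[s₀, s₁, …, sₙ]`,
namely `∏_{i=1}^n P(s_{i-1}, s_i)`. -/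
noncomputable def pathProb (S : PARS A) (l : List A) : ℝ≥0∞ :=
  ((l.zip l.tail).map fun p => (S.P p.1 p.2 : ℝ≥0∞)).prod

/-- `P(s →* t)`: the sum, over all finite paths from `s` to `t`,
of the path probabilities. -/
noncomputable def probReach (S : PARS A) (s t : A) : ℝ≥0∞ :=
  ∑' l : {l : List A // IsPath S.rel s t l}, S.pathProb l.1

/-- `∑_{t ∈ NF(s)} P(s →* t)`. -/
noncomputable def probNF (S : PARS A) (s : A) : ℝ≥0∞ :=
  ∑' t : NFof S.rel s, S.probReach s t.1

/-- `P(s →∞) := 1 - ∑_{t ∈ NF(s)} P(s →* t)`, the probability of diverging. -/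
noncomputable def probDiverge (S : PARS A) (s : A) : ℝ :=
  1 - (S.probNF s).toReal

/-- Almost-sure termination: every element diverges with probability `0`. -/
def ASTerminating (S : PARS A) : Prop := ∀ s, S.probDiverge s = 0

/-- Almost-sure convergence: whenever `s →* s₁` and `s →* s₂`, there is a
normal form `t` with `s₁ →* t`, `s₂ →* t` and `P(s₁ →* t) = P(s₂ →* t) = 1`. -/
def ASConvergent (S : PARS A) : Prop :=
  ∀ s s₁ s₂, Relation.ReflTransGen S.rel s s₁ → Relation.ReflTransGen S.rel s s₂ →
    ∃ t, NormalForm S.rel t ∧ Relation.ReflTransGen S.rel s₁ t ∧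
      Relation.ReflTransGen S.rel s₂ t ∧
      S.probReach s₁ t = 1 ∧ S.probReach s₂ t = 1

/-- Local almost-sure convergence: whenever `s → s₁` and `s → s₂`, there is a
normal form `t` with `s₁ →* t`, `s₂ →* t` and `P(s₁ →* t) = P(s₂ →* t) = 1`. -/
def LocallyASConvergent (S : PARS A) : Prop :=
  ∀ s s₁ s₂, S.rel s s₁ → S.rel s s₂ →
    ∃ t, NormalForm S.rel t ∧ Relation.ReflTransGen S.rel s₁ t ∧
      Relation.ReflTransGen S.rel s₂ t ∧
      S.probReach s₁ t = 1 ∧ S.probReach s₂ t = 1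

end PARS


private lemma nf_rtg_eq {A : Type*} {r : A → A → Prop} {t u : A}
    (h : NormalForm r t) (htu : Relation.ReflTransGen r t u) : u = t := by
  rcases Relation.ReflTransGen.cases_head htu with h1 | ⟨c, hc, _⟩
  · exact h1.symm
  · exact absurd ⟨c, hc⟩ h

private lemma rtg_to_eqvGen {A : Type*} {r : A → A → Prop} {a b : A}
    (h : Relation.ReflTransGen r a b) : Relation.EqvGen r a b := by
  induction h with
  | refl => exact Relation.EqvGen.refl a
  | tail _ hbc ih => exact Relation.EqvGen.trans _ _ _ ih (Relation.EqvGen.rel _ _ hbc)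

private lemma joinable_of_eqvGen {A : Type*} {r : A → A → Prop} (hc : Confluent r)
    {a b : A} (h : Relation.EqvGen r a b) :
    ∃ c, Relation.ReflTransGen r a c ∧ Relation.ReflTransGen r b c := by
  induction h with
  | rel a b hab => exact ⟨b, Relation.ReflTransGen.single hab, Relation.ReflTransGen.refl⟩
  | refl a => exact ⟨a, Relation.ReflTransGen.refl, Relation.ReflTransGen.refl⟩
  | symm a b _ ih => exact ⟨ih.choose, ih.choose_spec.2, ih.choose_spec.1⟩
  | trans a b d _ _ ih1 ih2 =>
    obtain ⟨c₁, hac₁, hbc₁⟩ := ih1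
    obtain ⟨c₂, hbc₂, hdc₂⟩ := ih2
    obtain ⟨c, hc₁, hc₂⟩ := hc b c₁ c₂ hbc₁ hbc₂
    exact ⟨c, hac₁.trans hc₁, hdc₂.trans hc₂⟩

private lemma eqvGen_map {A A' : Type*} {r : A → A → Prop} {r' : A' → A' → Prop}
    {G : A → A'} (hG : ∀ s t, r s t → Relation.EqvGen r' (G s) (G t))
    {a b : A} (h : Relation.EqvGen r a b) : Relation.EqvGen r' (G a) (G b) := by
  induction h with
  | rel a b hab => exact hG a b hab
  | refl a => exact Relation.EqvGen.refl _
  | symm a b _ ih => exact Relation.EqvGen.symm _ _ ih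
  | trans a b c _ _ ih1 ih2 => exact Relation.EqvGen.trans _ _ _ ih1 ih2

/-- for an almost-surely terminating PARS `S`, an ARS `r'` and a
map `G` satisfying (C1')–(C5'), `S` is almost-surely convergent if and only if
`r'` is confluent. -/
theorem asConvergent_iff_confluent_of_transformation
    {A : Type*} [Countable A] {A' : Type*} (S : PARS A)
    (r' : A' → A' → Prop) (G : A → A')
    (hterm : S.ASTerminating)
    (hC1 : Function.Surjective G)
    (hC2 : Normalizing S.rel ∧ Normalizing r')
    (hC3 : (∀ s t, S.rel s t → Relation.EqvGen r' (G s) (G t)) ∧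
           (∀ s t, Relation.EqvGen r' (G s) (G t) → Relation.EqvGen S.rel s t))
    (hC4 : (∀ t, NormalForm S.rel t → NormalForm r' (G t)) ∧
           (∀ t', NormalForm r' t' → ∀ t, G t = t' → NormalForm S.rel t))
    (hC5 : ∀ t u, NormalForm S.rel t → NormalForm S.rel u → G t = G u → t = u) :
    (S.ASConvergent ↔ Confluent r') := by
  obtain ⟨hC3a, hC3b⟩ := hC3
  obtain ⟨hC4a, hC4b⟩ := hC4
  constructor
  · -- ASConvergent → Confluent r'
    intro hconv s' s₁' s₂' h1 h2
    obtain ⟨t₁', ht₁'nf, ht₁'⟩ := hC2.2 s₁'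
    obtain ⟨t₂', ht₂'nf, ht₂'⟩ := hC2.2 s₂'
    obtain ⟨t₁, rfl⟩ := hC1 t₁'
    obtain ⟨t₂, rfl⟩ := hC1 t₂'
    have ht₁nf : NormalForm S.rel t₁ := hC4b _ ht₁'nf _ rfl
    have ht₂nf : NormalForm S.rel t₂ := hC4b _ ht₂'nf _ rfl
    have heqv' : Relation.EqvGen r' (G t₁) (G t₂) := by
      have e1 : Relation.EqvGen r' s' (G t₁) :=
        Relation.EqvGen.trans _ _ _ (rtg_to_eqvGen h1) (rtg_to_eqvGen ht₁')
      have e2 : Relation.EqvGen r' s' (G t₂) :=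
        Relation.EqvGen.trans _ _ _ (rtg_to_eqvGen h2) (rtg_to_eqvGen ht₂')
      exact Relation.EqvGen.trans _ _ _ (Relation.EqvGen.symm _ _ e1) e2
    have heqv : Relation.EqvGen S.rel t₁ t₂ := hC3b _ _ heqv'
    have hconfS : Confluent S.rel := by
      intro s a b ha hb
      obtain ⟨t, _, hta, htb, _, _⟩ := hconv s a b ha hb
      exact ⟨t, hta, htb⟩
    obtain ⟨c, hc1, hc2⟩ := joinable_of_eqvGen hconfS heqv
    have hc1' := nf_rtg_eq ht₁nf hc1
    have hc2' := nf_rtg_eq ht₂nf hc2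
    have : t₁ = t₂ := by rw [← hc1', ← hc2']
    exact ⟨G t₁, ht₁', this ▸ ht₂'⟩
  · -- Confluent r' → ASConvergent
    intro hconf s s₁ s₂ h1 h2
    obtain ⟨t, htnf, ht⟩ := hC2.1 s₁
    -- uniqueness of reachable normal forms
    have huniq : ∀ a, Relation.ReflTransGen S.rel s a →
        ∀ u, NormalForm S.rel u → Relation.ReflTransGen S.rel a u → u = t := by
      intro a ha u hunf hau
      have heqv : Relation.EqvGen S.rel u t := by
        have e1 : Relation.EqvGen S.rel s u :=
          Relation.EqvGen.trans _ _ _ (rtg_to_eqvGen ha) (rtg_to_eqvGen hau)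
        have e2 : Relation.EqvGen S.rel s t :=
          Relation.EqvGen.trans _ _ _ (rtg_to_eqvGen h1) (rtg_to_eqvGen ht)
        exact Relation.EqvGen.trans _ _ _ (Relation.EqvGen.symm _ _ e1) e2
      have heqv' : Relation.EqvGen r' (G u) (G t) := eqvGen_map hC3a heqv
      obtain ⟨c, hc1, hc2⟩ := joinable_of_eqvGen hconf heqv'
      have hc1' := nf_rtg_eq (hC4a _ hunf) hc1
      have hc2' := nf_rtg_eq (hC4a _ htnf) hc2
      exact hC5 u t hunf htnf (by rw [← hc1', ← hc2'])
    -- P(sᵢ →* t) = 1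
    have key : ∀ a, Relation.ReflTransGen S.rel s a →
        Relation.ReflTransGen S.rel a t ∧ S.probReach a t = 1 := by
      intro a ha
      obtain ⟨u, hunf, hau⟩ := hC2.1 a
      have hut : u = t := huniq a ha u hunf hau
      subst hut
      refine ⟨hau, ?_⟩
      have hset : NFof S.rel a = {u} := by
        ext x
        constructor
        · rintro ⟨hxnf, hax⟩
          exact huniq a ha x hxnf hax
        · rintro rfl
          exact ⟨hunf, hau⟩
      have hNF : S.probNF a = S.probReach a u := by
        unfold PARS.probNF
        rw [hset]
        exact tsum_singleton u (S.probReach a)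
      have hd := hterm a
      unfold PARS.probDiverge at hd
      have h1' : (S.probNF a).toReal = 1 := by linarith
      have : S.probNF a = 1 := by
        rcases eq_or_ne (S.probNF a) ⊤ with h | h
        · rw [h] at h1'; simp at h1'
        · rw [← ENNReal.toReal_eq_one_iff] at *; exact h1'
      rw [← hNF]; exact this
    obtain ⟨h1t, h1p⟩ := key s₁ h1
    obtain ⟨h2t, h2p⟩ := key s₂ h2
    exact ⟨t, htnf, h1t, h2t, h1p, h2p⟩
end

section
/- An almost-surely terminating probabilistic abstract reduction system is almost-surely convergent if and only if it is confluent. -/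
open scoped ENNReal NNReal

lemma nf_rtg {A : Type*} {r : A → A → Prop} {t u : A} (h : NormalForm r t)
    (h2 : Relation.ReflTransGen r t u) : u = t := by
  rcases h2.cases_head with h' | ⟨c, hc, _⟩
  · exact h'.symm
  · exact absurd ⟨c, hc⟩ h

/-- an almost-surely terminating PARS is almost-surely
convergent if and only if it is confluent. -/
theorem asConvergent_iff_confluent
    {A : Type*} [Countable A] (S : PARS A) (hterm : S.ASTerminating) :
    S.ASConvergent ↔ Confluent S.rel := by
  constructor
  · intro h s s₁ s₂ h1 h2
    obtain ⟨t, _, ht1, ht2, _, _⟩ := h s s₁ s₂ h1 h2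
    exact ⟨t, ht1, ht2⟩
  · intro hconf
    have hone : ∀ s, S.probNF s = 1 := by
      intro s
      have h0 := hterm s
      unfold PARS.probDiverge at h0
      have h1 : (S.probNF s).toReal = 1 := by linarith
      rwa [ENNReal.toReal_eq_one_iff] at h1
    have hsub : ∀ s, (NFof S.rel s).Subsingleton := by
      intro s t ht u hu
      obtain ⟨v, hv1, hv2⟩ := hconf s t u ht.2 hu.2
      have e1 : v = t := nf_rtg ht.1 hv1
      have e2 : v = u := nf_rtg hu.1 hv2
      rw [← e1, e2]
    have hne : ∀ s, (NFof S.rel s).Nonempty := by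
      intro s
      by_contra h
      rw [Set.not_nonempty_iff_eq_empty] at h
      have h1 := hone s
      unfold PARS.probNF at h1
      rw [h] at h1
      simp at h1
    have hreach : ∀ s t, t ∈ NFof S.rel s → S.probReach s t = 1 := by
      intro s t ht
      have h1 := hone s
      unfold PARS.probNF at h1
      rwa [tsum_eq_single (⟨t, ht⟩ : NFof S.rel s)
        (fun b hb => absurd (Subtype.ext (hsub s b.2 ht)) hb)] at h1
    intro s s₁ s₂ h1 h2
    obtain ⟨t, ht⟩ := hne s₁
    obtain ⟨u, hu⟩ := hne s₂
    have htns : t ∈ NFof S.rel s := ⟨ht.1, h1.trans ht.2⟩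
    have huns : u ∈ NFof S.rel s := ⟨hu.1, h2.trans hu.2⟩
    have e : u = t := hsub s huns htns
    subst e
    exact ⟨u, ht.1, ht.2, hu.2, hreach s₁ u ht, hreach s₂ u hu⟩
end

section
/- For every element s of a probabilistic abstract reduction system, P(s →* ·) together with P(s →∞) comprise a probability distribution: for every normal form t with s →* t, 0 ≤ P(s →* t) ≤ 1; moreover ∑_{t ∈ NF(s)} P(s →* t) ≤ 1, so that 0 ≤ P(s →∞) ≤ 1 and ∑_{t ∈ NF(s)} P(s →* t) + P(s →∞) = 1. -/
open scoped ENNReal NNReal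

/-!
A path from `s` to a normal form is `[s]` when `s` is itself a normal form, and otherwise a
step `s → u` followed by a path from `u` to a normal form. By induction on the length, the
paths with at most `n` nodes therefore have total probability at most `∑ᵤ P(s, u) · 1 = 1`,
and letting `n` grow gives `∑_{t ∈ NF(s)} P(s →* t) ≤ 1`; the remaining claims are arithmetic.
-/

section PathToNormalForm

variable {A : Type*} {r : A → A → Prop}

def IsPathToNormalForm (r : A → A → Prop) (s : A) (l : List A) : Prop :=
  ∃ t, NormalForm r t ∧ IsPath r s t l

lemma IsPathToNormalForm.ne_nil {s : A} {l : List A} (hl : IsPathToNormalForm r s l) :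
    l ≠ [] := by
  rintro rfl
  simp [IsPathToNormalForm, IsPath] at hl

lemma IsPathToNormalForm.eq_singleton {s : A} {l : List A} (hl : IsPathToNormalForm r s l)
    (hs : NormalForm r s) : l = [s] := by
  obtain ⟨-, -, hchain, hhead, -⟩ := hl
  match l, hchain, hhead with
  | [_], _, rfl => rfl
  | _ :: u :: _, hchain, rfl => exact absurd ⟨u, (List.isChain_cons_cons.mp hchain).1⟩ hs

lemma IsPathToNormalForm.exists_eq_cons_cons {s : A} {l : List A}
    (hl : IsPathToNormalForm r s l) (hs : ¬NormalForm r s) :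
    ∃ u rest, l = s :: u :: rest := by
  obtain ⟨t, ht, -, hhead, hlast⟩ := hl
  match l, hhead, hlast with
  | [_], rfl, hlast =>
    obtain rfl : s = t := by simpa using hlast
    exact absurd ht hs
  | _ :: u :: rest, rfl, _ => exact ⟨u, rest, rfl⟩

lemma IsPathToNormalForm.of_cons_cons {s a u : A} {rest : List A}
    (hl : IsPathToNormalForm r s (a :: u :: rest)) : IsPathToNormalForm r u (u :: rest) := by
  obtain ⟨t, ht, hchain, -, hlast⟩ := hl
  rw [List.getLast?_cons_cons] at hlast
  exact ⟨t, ht, (List.isChain_cons_cons.mp hchain).2, rfl, hlast⟩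

end PathToNormalForm

namespace PARS

variable {A : Type*} [Countable A] (S : PARS A)

@[simp]
lemma pathProb_singleton (a : A) : S.pathProb [a] = 1 := by
  simp [pathProb]

@[simp]
lemma pathProb_cons_cons (a b : A) (l : List A) :
    S.pathProb (a :: b :: l) = S.P a b * S.pathProb (b :: l) := by
  simp [pathProb]

lemma tsum_pathProb_isPathToNormalForm_succ_le {s : A} (hs : ¬NormalForm S.rel s) (n : ℕ) :
    ∑' l, {l | IsPathToNormalForm S.rel s l ∧ l.length ≤ n + 1}.indicator S.pathProb l ≤
      ∑' u, S.P s u *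
        ∑' l, {l | IsPathToNormalForm S.rel u l ∧ l.length ≤ n}.indicator S.pathProb l := by
  set T := {l | IsPathToNormalForm S.rel s l ∧ l.length ≤ n + 1}
  set T' := fun u => {l | IsPathToNormalForm S.rel u l ∧ l.length ≤ n}
  have hinj : Function.Injective fun p : A × List A => s :: p.1 :: p.2 := by
    rintro ⟨u, rest⟩ ⟨u', rest'⟩ h
    simp_all
  have hsupp : Function.support (T.indicator S.pathProb) ⊆
      Set.range fun p : A × List A => s :: p.1 :: p.2 := fun l hl => by
    obtain ⟨u, rest, rfl⟩ := (Set.support_indicator_subset hl).1.exists_eq_cons_cons hs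
    exact ⟨(u, rest), rfl⟩
  have hstep (u : A) (rest : List A) : T.indicator S.pathProb (s :: u :: rest) ≤
      S.P s u * (T' u).indicator S.pathProb (u :: rest) := by
    by_cases h : s :: u :: rest ∈ T
    · have h' : u :: rest ∈ T' u := ⟨h.1.of_cons_cons, by simpa using h.2⟩
      rw [Set.indicator_of_mem h, Set.indicator_of_mem h', pathProb_cons_cons]
    · rw [Set.indicator_of_notMem h]
      exact zero_le
  calc ∑' l, T.indicator S.pathProb l
      = ∑' p : A × List A, T.indicator S.pathProb (s :: p.1 :: p.2) := (hinj.tsum_eq hsupp).symm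
    _ = ∑' u, ∑' rest, T.indicator S.pathProb (s :: u :: rest) := ENNReal.tsum_prod'
    _ ≤ ∑' u, ∑' rest, S.P s u * (T' u).indicator S.pathProb (u :: rest) :=
        ENNReal.tsum_le_tsum fun u => ENNReal.tsum_le_tsum fun rest => hstep u rest
    _ ≤ ∑' u, S.P s u * ∑' l, (T' u).indicator S.pathProb l := by
        simp_rw [ENNReal.tsum_mul_left]
        exact ENNReal.tsum_le_tsum fun u =>
          mul_le_mul_right (ENNReal.tsum_comp_le_tsum_of_injective List.cons_injective _) _

lemma tsum_pathProb_isPathToNormalForm_length_le_le_one (n : ℕ) (s : A) :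
    ∑' l, {l | IsPathToNormalForm S.rel s l ∧ l.length ≤ n}.indicator S.pathProb l ≤ 1 := by
  induction n generalizing s with
  | zero =>
    have hempty : {l | IsPathToNormalForm S.rel s l ∧ l.length ≤ 0} = ∅ :=
      Set.eq_empty_of_forall_notMem fun l ⟨hl, hlen⟩ =>
        hl.ne_nil (List.eq_nil_of_length_eq_zero (Nat.le_zero.mp hlen))
    rw [hempty]
    simp
  | succ n ih =>
    by_cases hs : NormalForm S.rel s
    · have hsub : {l | IsPathToNormalForm S.rel s l ∧ l.length ≤ n + 1} ⊆ {[s]} :=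
        fun l hl => hl.1.eq_singleton hs
      calc _ ≤ ∑' l, ({[s]} : Set (List A)).indicator S.pathProb l :=
            ENNReal.tsum_le_tsum (Set.indicator_le_indicator_of_subset hsub fun _ => zero_le)
        _ = 1 := by rw [← tsum_subtype, tsum_singleton, pathProb_singleton]
    · calc _ ≤ _ := S.tsum_pathProb_isPathToNormalForm_succ_le hs n
        _ ≤ ∑' u, (S.P s u : ℝ≥0∞) * 1 := by gcongr with u; exact ih u
        _ = 1 := by simpa using S.sum_one s (not_not.mp hs)

lemma tsum_pathProb_isPathToNormalForm_le_one (s : A) :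
    ∑' l : {l | IsPathToNormalForm S.rel s l}, S.pathProb l ≤ 1 := by
  rw [tsum_subtype, ENNReal.tsum_eq_iSup_sum]
  refine iSup_le fun F => ?_
  calc ∑ l ∈ F, {l | IsPathToNormalForm S.rel s l}.indicator S.pathProb l
      = ∑ l ∈ F, {l | IsPathToNormalForm S.rel s l ∧ l.length ≤ F.sup List.length}.indicator
          S.pathProb l := by
        refine Finset.sum_congr rfl fun l hl => ?_
        have hlen : l.length ≤ F.sup List.length := Finset.le_sup hl
        classical
        simp [Set.indicator_apply, hlen]
    _ ≤ 1 :=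
        (ENNReal.sum_le_tsum F).trans (S.tsum_pathProb_isPathToNormalForm_length_le_le_one _ s)

lemma probNF_le_one (s : A) : S.probNF s ≤ 1 := by
  let toPath (p : Σ t : NFof S.rel s, {l // IsPath S.rel s t l}) :
      {l | IsPathToNormalForm S.rel s l} :=
    ⟨p.2.1, p.1.1, p.1.2.1, p.2.2⟩
  have hinj : Function.Injective toPath := by
    rintro ⟨⟨t, ht⟩, l, hl⟩ ⟨⟨t', ht'⟩, l', hl'⟩ h
    obtain rfl : l = l' := congrArg Subtype.val h
    obtain rfl : t = t' := Option.some.inj (hl.2.2.symm.trans hl'.2.2)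
    rfl
  calc S.probNF s = ∑' p : Σ t : NFof S.rel s, {l // IsPath S.rel s t l}, S.pathProb p.2.1 :=
        (ENNReal.tsum_sigma' (β := fun t : NFof S.rel s => {l // IsPath S.rel s t l})
          fun p => S.pathProb p.2.1).symm
    _ ≤ ∑' l : {l | IsPathToNormalForm S.rel s l}, S.pathProb l :=
        ENNReal.tsum_comp_le_tsum_of_injective hinj (S.pathProb ·)
    _ ≤ 1 := S.tsum_pathProb_isPathToNormalForm_le_one s

end PARS

/-- for every element `s`, `P(s →* ·)` together with `P(s →∞)`
is a probability distribution: each `P(s →* t) ≤ 1` for `t ∈ NF(s)`,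
`∑_{t ∈ NF(s)} P(s →* t) ≤ 1`, `0 ≤ P(s →∞) ≤ 1` and
`∑_{t ∈ NF(s)} P(s →* t) + P(s →∞) = 1`. -/
theorem probReach_probDiverge_distribution
    {A : Type*} [Countable A] (S : PARS A) (s : A) :
    (∀ t ∈ NFof S.rel s, S.probReach s t ≤ 1) ∧
    S.probNF s ≤ 1 ∧
    0 ≤ S.probDiverge s ∧ S.probDiverge s ≤ 1 ∧
    (S.probNF s).toReal + S.probDiverge s = 1 := by
  have hNF : S.probNF s ≤ 1 := S.probNF_le_one s
  have hreach (t : A) (ht : t ∈ NFof S.rel s) : S.probReach s t ≤ 1 :=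
    (ENNReal.le_tsum (⟨t, ht⟩ : NFof S.rel s)).trans hNF
  have hNF_real : (S.probNF s).toReal ≤ 1 :=
    ENNReal.toReal_le_of_le_ofReal zero_le_one (by simpa using hNF)
  refine ⟨hreach, hNF, ?_, ?_, ?_⟩ <;> unfold PARS.probDiverge
  · linarith
  · linarith [ENNReal.toReal_nonneg (a := S.probNF s)]
  · ring
end
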